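/- Let X₁, X₂, … be i.i.d. mean-zero real random variables with partial sums Sₙ, and (aₙ) positive reals with aₙ/√n nondecreasing and tending to infinity. If limsup_{n→∞} |Sₙ|/aₙ < ∞ almost surely, then ∑ₙ P(|X₁| ≥ aₙ) < ∞. -/

import Mathlib

open MeasureTheory ProbabilityTheory Filter Set
open scoped ProbabilityTheory ENNReal

/-!
Suppose `∑ P(|X₁| ≥ aₙ) = ∞`. Since `aₙ/√n` is nondecreasing, `a_{mn} ≥ √m aₙ`, and grouping the
indices into blocks of length `m` shows that `∑ P(|X₁| ≥ c aₙ) = ∞` for every constant `c`.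
By the second Borel–Cantelli lemma, almost surely `|Xₙ| ≥ c a_{n+1}` infinitely often, for every
`c`. This is impossible where `|Sₙ| ≤ M aₙ`, since then `|Xₙ| = |S_{n+1} - Sₙ| ≤ 2M a_{n+1}`.
-/

lemma sqrt_mul_le_of_div_sqrt_le {a : ℕ → ℝ} (hapos : ∀ n, 1 ≤ n → 0 < a n)
    (hmono : ∀ m n, 1 ≤ m → m ≤ n → a m / √m ≤ a n / √n) {m n k : ℕ}
    (hm : 1 ≤ m) (hn : 1 ≤ n) (hk : m * n ≤ k) : √m * a n ≤ a k := by
  have hnk : n ≤ k := le_trans (Nat.le_mul_of_pos_left n hm) hk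
  have hsn : √(n : ℝ) ≠ 0 := (Real.sqrt_pos.2 (by exact_mod_cast hn)).ne'
  have hsk : √(k : ℝ) ≠ 0 := (Real.sqrt_pos.2 (by exact_mod_cast hn.trans hnk)).ne'
  calc √m * a n = √((m : ℝ) * n) * (a n / √n) := by
        rw [Real.sqrt_mul (Nat.cast_nonneg m)]; field_simp
    _ ≤ √(k : ℝ) * (a k / √k) :=
        mul_le_mul (Real.sqrt_le_sqrt (by exact_mod_cast hk)) (hmono n k hn hnk)
          (div_nonneg (hapos n hn).le (Real.sqrt_nonneg _)) (Real.sqrt_nonneg _)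
    _ = a k := by field_simp

lemma ENNReal.tsum_nat_add_eq_top {f : ℕ → ℝ≥0∞} (hf : ∑' n, f n = ∞) (hf_ne_top : ∀ n, f n ≠ ∞)
    (m : ℕ) : ∑' n, f (n + m) = ∞ := by
  induction m with
  | zero => simpa using hf
  | succ m ih =>
    simpa only [add_assoc, add_comm 1 m] using ENNReal.tsum_add_one_eq_top ih (hf_ne_top _)

lemma ENNReal.tsum_comp_div_nat (f : ℕ → ℝ≥0∞) {m : ℕ} (hm : m ≠ 0) :
    ∑' k, f (k / m) = m * ∑' n, f n := by
  have : NeZero m := ⟨hm⟩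
  rw [show ∑' k, f (k / m) = ∑' p : ℕ × Fin m, f p.1 from
    (Nat.divModEquiv m).tsum_eq (fun p => f p.1), ENNReal.tsum_prod']
  simp [ENNReal.tsum_mul_left]

lemma tsum_comp_const_mul_eq_top {T : ℝ → ℝ≥0∞} (hT : Antitone T) (hT_ne_top : ∀ t, T t ≠ ∞)
    {a : ℕ → ℝ} (hapos : ∀ n, 1 ≤ n → 0 < a n)
    (ha : ∀ {m n k : ℕ}, 1 ≤ m → 1 ≤ n → m * n ≤ k → √m * a n ≤ a k)
    (hsum : ∑' n, T (a n) = ∞) (c : ℝ) : ∑' n, T (c * a (n + 1)) = ∞ := by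
  obtain ⟨m, hcm⟩ := exists_nat_gt (c ^ 2)
  have hm : 1 ≤ m := by exact_mod_cast (sq_nonneg c).trans_lt hcm
  have hc : c ≤ √m := (le_abs_self c).trans (Real.abs_le_sqrt hcm.le)
  have hle : ∀ k, T (a (k + m)) ≤ T (c * a (k / m + 1)) := fun k => hT <|
    calc c * a (k / m + 1) ≤ √m * a (k / m + 1) :=
          mul_le_mul_of_nonneg_right hc (hapos _ le_add_self).le
      _ ≤ a (k + m) := ha hm le_add_self (by rw [mul_add_one]; gcongr; exact Nat.mul_div_le k m)
  have htop : ∞ ≤ m * ∑' n, T (c * a (n + 1)) := by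
    rw [← ENNReal.tsum_nat_add_eq_top hsum (fun _ => hT_ne_top _) m,
      ← ENNReal.tsum_comp_div_nat (fun n => T (c * a (n + 1))) (by omega)]
    exact ENNReal.tsum_le_tsum hle
  exact ((ENNReal.mul_eq_top.1 (top_le_iff.1 htop)).resolve_right
    fun h => ENNReal.natCast_ne_top m h.1).2

namespace ProbabilityTheory

variable {Ω β : Type*} [MeasurableSpace Ω] [MeasurableSpace β] {μ : Measure Ω}

lemma iIndepFun.iIndepSet_preimage {ι : Type*} {X : ι → Ω → β} (hX : ∀ i, Measurable (X i))
    (h : iIndepFun X μ) {B : ι → Set β} (hB : ∀ i, MeasurableSet (B i)) :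
    iIndepSet (fun i => X i ⁻¹' B i) μ := by
  rw [iIndepSet_iff_meas_biInter fun i => hX i (hB i)]
  exact fun s => h.measure_inter_preimage_eq_mul s fun i _ => hB i

lemma iIndepFun.ae_frequently_mem_of_tsum_eq_top [IsProbabilityMeasure μ] {X : ℕ → Ω → β}
    (hX : ∀ n, Measurable (X n)) (h : iIndepFun X μ) {B : ℕ → Set β}
    (hB : ∀ n, MeasurableSet (B n)) (hsum : ∑' n, μ (X n ⁻¹' B n) = ∞) :
    ∀ᵐ ω ∂μ, ∃ᶠ n in atTop, X n ω ∈ B n := by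
  have hmeas : ∀ n, MeasurableSet (X n ⁻¹' B n) := fun n => hX n (hB n)
  have hlimsup := measure_limsup_eq_one hmeas (h.iIndepSet_preimage hX hB) hsum
  filter_upwards [(mem_ae_iff_prob_eq_one (.measurableSet_limsup hmeas)).2 hlimsup] with ω hω
  exact mem_limsup_iff_frequently_mem.1 hω

end ProbabilityTheory

lemma exists_abs_sub_le_mul_of_bddAbove {s a : ℕ → ℝ} (hapos : ∀ n, 1 ≤ n → 0 < a n)
    (ha : ∀ n, 1 ≤ n → a n ≤ a (n + 1)) (hs : BddAbove (range fun n => |s n| / a n)) :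
    ∃ C, ∀ n, 1 ≤ n → |s (n + 1) - s n| ≤ C * a (n + 1) := by
  obtain ⟨M, hM⟩ := hs
  have hsM : ∀ n, 1 ≤ n → |s n| ≤ M * a n := fun n hn =>
    (div_le_iff₀ (hapos n hn)).1 (hM ⟨n, rfl⟩)
  have hM0 : 0 ≤ M := (div_nonneg (abs_nonneg _) (hapos 1 le_rfl).le).trans (hM ⟨1, rfl⟩)
  refine ⟨2 * M, fun n hn => ?_⟩
  calc |s (n + 1) - s n| ≤ |s (n + 1)| + |s n| := abs_sub _ _
    _ ≤ M * a (n + 1) + M * a n := add_le_add (hsM _ (by omega)) (hsM n hn)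
    _ ≤ 2 * M * a (n + 1) := by nlinarith [ha n hn]

theorem stmt_17 {Ω : Type*} [MeasureSpace Ω] [IsProbabilityMeasure (ℙ : Measure Ω)]
    (X : ℕ → Ω → ℝ) (hX : ∀ n, Measurable (X n))
    (hindep : iIndepFun X ℙ)
    (hident : ∀ n, Measure.map (X n) ℙ = Measure.map (X 0) ℙ)
    (S : ℕ → Ω → ℝ) (hS : ∀ n ω, S n ω = ∑ i ∈ Finset.range n, X i ω)
    (a : ℕ → ℝ) (hapos : ∀ n, 1 ≤ n → 0 < a n)
    (hmono : ∀ m n, 1 ≤ m → m ≤ n → a m / Real.sqrt m ≤ a n / Real.sqrt n)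
    (hbdd : ∀ᵐ ω, BddAbove (Set.range fun n => |S n ω| / a n)) :
    Summable (fun n => (ℙ {ω | a n ≤ |X 0 ω|}).toReal) := by
  have ha := @sqrt_mul_le_of_div_sqrt_le a hapos hmono
  have hB : ∀ t : ℝ, MeasurableSet {x : ℝ | t ≤ |x|} := fun t =>
    measurableSet_le measurable_const measurable_abs
  have hdist : ∀ n t, ℙ (X n ⁻¹' {x | t ≤ |x|}) = ℙ {ω | t ≤ |X 0 ω|} := fun n t =>
    (IdentDistrib.mk (hX n).aemeasurable (hX 0).aemeasurable (hident n)).measure_mem_eq (hB t)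
  have hT : Antitone fun t : ℝ => ℙ {ω | t ≤ |X 0 ω|} := fun s t hst =>
    measure_mono fun ω hω => hst.trans hω
  refine ENNReal.summable_toReal fun hsum => ?_
  have hfreq : ∀ k : ℕ, ∀ᵐ ω, ∃ᶠ n in atTop, (k : ℝ) * a (n + 1) ≤ |X n ω| := fun k =>
    hindep.ae_frequently_mem_of_tsum_eq_top hX (fun n => hB _) <| by
      simpa only [hdist] using tsum_comp_const_mul_eq_top hT (fun _ => measure_ne_top _ _)
        hapos ha hsum k
  obtain ⟨ω, hbω, hfreqω⟩ := (hbdd.and (ae_all_iff.2 hfreq)).exists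
  obtain ⟨C, hC⟩ := exists_abs_sub_le_mul_of_bddAbove hapos
    (fun n hn => by simpa using ha le_rfl hn (by omega)) hbω
  obtain ⟨k, hk⟩ := exists_nat_gt C
  obtain ⟨n, hkn, hn⟩ := ((hfreqω k).and_eventually (eventually_ge_atTop 1)).exists
  have hX_eq : X n ω = S (n + 1) ω - S n ω := by simp [hS, Finset.sum_range_succ]
  have hXle : |X n ω| ≤ C * a (n + 1) := hX_eq ▸ hC n hn
  exact (hkn.trans hXle).not_gt (mul_lt_mul_of_pos_right hk (hapos _ (by omega)))
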